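/- Let X and Z be topological spaces equipped with their Borel σ-algebras, with X second-countable, let φ : X → Z be a continuous map, and let P_ID, G_ID, G_OOD be Borel probability measures on X. Assume (i) the supports of φ#G_ID and φ#G_OOD are disjoint, and (ii) φ#P_ID = φ#G_ID. Then the auxiliary OOD data are almost surely reliable with respect to the real ID data: the set of points x with φ(x) ∈ supp(φ#P_ID) has G_OOD-measure zero. -/

import Mathlib

open MeasureTheory

/-- The support of a Borel measure: the set of points all of whose open
neighborhoods have positive measure. -/
def msupport {X : Type*} [TopologicalSpace X] [MeasurableSpace X]
    (μ : Measure X) : Set X :=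
  {x | ∀ U : Set X, IsOpen U → x ∈ U → 0 < μ U}

/-- Proposition 1 (ATOL), almost-sure form: under separation of the transformed
auxiliary distributions and alignment of the transformed ID distributions, the
set of auxiliary OOD points that are not reliable has `G_OOD`-measure zero. -/
theorem atol_reliable_ae
    {X Z : Type*} [TopologicalSpace X] [MeasurableSpace X] [BorelSpace X]
    [SecondCountableTopology X]
    [TopologicalSpace Z] [MeasurableSpace Z] [BorelSpace Z]
    (φ : X → Z) (hφ : Continuous φ)
    (P_ID G_ID G_OOD : Measure X)
    [IsProbabilityMeasure P_ID] [IsProbabilityMeasure G_ID]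
    [IsProbabilityMeasure G_OOD]
    (hsep : msupport (Measure.map φ G_ID) ∩ msupport (Measure.map φ G_OOD) = ∅)
    (halign : Measure.map φ P_ID = Measure.map φ G_ID) :
    G_OOD {x | φ x ∈ msupport (Measure.map φ P_ID)} = 0 := by
  rw [halign] at *
  refine measure_null_of_locally_null _ fun x hx => ?_
  have hxid : φ x ∈ msupport (Measure.map φ G_ID) := hx
  have hnot : φ x ∉ msupport (Measure.map φ G_OOD) := by
    intro h
    exact absurd (Set.mem_inter hxid h) (by simp [hsep])
  simp only [msupport, Set.mem_setOf_eq, not_forall] at hnot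
  obtain ⟨U, hU, hxU, hle⟩ := hnot
  refine ⟨φ ⁻¹' U, mem_nhdsWithin_of_mem_nhds ((hU.preimage hφ).mem_nhds hxU), ?_⟩
  have := Measure.map_apply hφ.measurable hU.measurableSet (μ := G_OOD)
  rw [← this]
  exact le_antisymm (not_lt.mp hle) zero_le
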